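/- arXiv:2509.16716 — 7 statements merged into one kernel-verified Lean document; each statement's English description precedes it below -/
import Mathlib

section
/- Let m > 0, a ∈ ℝ, j ∈ {−1, 1}, and let Y : ℝ → ℝ be twice differentiable with Y''(z) + m·Y(z) = 0 for all z ∈ ℝ, Y(a) = 0, and Y'(a) ≠ 0. Then for every z ∈ ℝ with 0 < j·(z − a) < π/√m, one has T_j(z) = a, where T_j(z) = z − (1/√m)·arctan_j(√m·Y(z)/Y'(z)) if Y'(z) ≠ 0 and T_j(z) = z − jπ/(2√m) if Y'(z) = 0. (The fixed point method is exact when the coefficient Ω of the ODE is constant.) -/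
/-- The branch-corrected arctangent: `arctan_j(ζ) = arctan ζ` if `j·ζ > 0`,
and `arctan ζ + j·π` otherwise. -/
noncomputable def arctanJ (j ζ : ℝ) : ℝ :=
  if j * ζ > 0 then Real.arctan ζ else Real.arctan ζ + j * Real.pi

/-- The fixed point map associated to the ODE `Y'' + Ω·Y = 0` in normal form. -/
noncomputable def Tmap (Ω Y Y' : ℝ → ℝ) (j z : ℝ) : ℝ :=
  if Y' z = 0 then z - j * Real.pi / (2 * Real.sqrt (Ω z))
  else z - (1 / Real.sqrt (Ω z)) * arctanJ j (Real.sqrt (Ω z) * Y z / Y' z)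

/-! Put `ω = √m` and `θ = ω (z - a)`. Along a solution of `Y'' + ω²Y = 0` the Wronskians
of `Y` against `sin (ω (x - a))` and `cos (ω (x - a))` are constant; evaluating them at `a`
gives `ω Y z = Y' a · sin θ` and `Y' z = Y' a · cos θ`, so `√m Y z / Y' z = tan θ`.
For `0 < j θ < π` the branch `arctan_j` inverts `tan`, hence `T_j z = z - θ / ω = a`;
when `cos θ = 0` we have `j θ = π / 2`, and the convention for `Y' z = 0` gives the same. -/

open Real

section HarmonicOscillator

variable {ω a : ℝ} {Y Y' Y'' : ℝ → ℝ}

theorem harmonic_wronskian_const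
    (hY : ∀ x, HasDerivAt Y (Y' x) x) (hY' : ∀ x, HasDerivAt Y' (Y'' x) x)
    (hODE : ∀ x, Y'' x + ω ^ 2 * Y x = 0) (z : ℝ) :
    Y' z * sin (ω * (z - a)) - ω * Y z * cos (ω * (z - a)) = -(ω * Y a) ∧
      Y' z * cos (ω * (z - a)) + ω * Y z * sin (ω * (z - a)) = Y' a := by
  have hθ : ∀ x, HasDerivAt (fun x => ω * (x - a)) ω x := fun x => by
    simpa using ((hasDerivAt_id x).sub_const a).const_mul ω
  have hW₁ : ∀ x, HasDerivAt
      (fun x => Y' x * sin (ω * (x - a)) - ω * Y x * cos (ω * (x - a))) 0 x := fun x =>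
    (((hY' x).mul (hθ x).sin).sub (((hY x).const_mul ω).mul (hθ x).cos)).congr_deriv
      (by linear_combination sin (ω * (x - a)) * hODE x)
  have hW₂ : ∀ x, HasDerivAt
      (fun x => Y' x * cos (ω * (x - a)) + ω * Y x * sin (ω * (x - a))) 0 x := fun x =>
    (((hY' x).mul (hθ x).cos).add (((hY x).const_mul ω).mul (hθ x).sin)).congr_deriv
      (by linear_combination cos (ω * (x - a)) * hODE x)
  constructor
  · simpa using is_const_of_deriv_eq_zero (fun x => (hW₁ x).differentiableAt)
      (fun x => (hW₁ x).deriv) z a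
  · simpa using is_const_of_deriv_eq_zero (fun x => (hW₂ x).differentiableAt)
      (fun x => (hW₂ x).deriv) z a

theorem harmonic_eq_sin_cos_of_eq_zero
    (hY : ∀ x, HasDerivAt Y (Y' x) x) (hY' : ∀ x, HasDerivAt Y' (Y'' x) x)
    (hODE : ∀ x, Y'' x + ω ^ 2 * Y x = 0) (hYa : Y a = 0) (z : ℝ) :
    ω * Y z = Y' a * sin (ω * (z - a)) ∧ Y' z = Y' a * cos (ω * (z - a)) := by
  obtain ⟨h₁, h₂⟩ := harmonic_wronskian_const (a := a) hY hY' hODE z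
  have hpyth := sin_sq_add_cos_sq (ω * (z - a))
  rw [hYa, mul_zero, neg_zero] at h₁
  constructor
  · linear_combination sin (ω * (z - a)) * h₂ - cos (ω * (z - a)) * h₁ - ω * Y z * hpyth
  · linear_combination sin (ω * (z - a)) * h₁ + cos (ω * (z - a)) * h₂ - Y' z * hpyth

end HarmonicOscillator

section BranchArctan

theorem arctanJ_neg_one (x : ℝ) : arctanJ (-1) x = -arctanJ 1 (-x) := by
  simp only [arctanJ, neg_one_mul, one_mul, arctan_neg]
  split_ifs <;> ring

theorem arctanJ_one_tan {θ : ℝ} (h₀ : 0 < θ) (hπ : θ < π) (hc : cos θ ≠ 0) :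
    arctanJ 1 (tan θ) = θ := by
  have hθ : θ ≠ π / 2 := fun h => hc (h ▸ cos_pi_div_two)
  rw [arctanJ, one_mul]
  rcases hθ.lt_or_gt with hlt | hgt
  · rw [if_pos (tan_pos_of_pos_of_lt_pi_div_two h₀ hlt)]
    exact arctan_tan (by linarith) hlt
  · have hshift : tan θ = tan (θ - π) := (tan_periodic.sub_eq θ).symm
    rw [hshift, if_neg (tan_neg_of_neg_of_pi_div_two_lt (by linarith) (by linarith)).not_gt,
      arctan_tan (by linarith) (by linarith)]
    ring

variable {j θ : ℝ}

theorem arctanJ_tan (hj : j = 1 ∨ j = -1) (h₀ : 0 < j * θ) (hπ : j * θ < π)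
    (hc : cos θ ≠ 0) : arctanJ j (tan θ) = θ := by
  rcases hj with rfl | rfl
  · rw [one_mul] at h₀ hπ
    exact arctanJ_one_tan h₀ hπ hc
  · rw [neg_one_mul] at h₀ hπ
    rw [arctanJ_neg_one, ← tan_neg, arctanJ_one_tan h₀ hπ (by rwa [cos_neg]), neg_neg]

theorem eq_mul_pi_div_two_of_cos_eq_zero (hj : j = 1 ∨ j = -1) (h₀ : 0 < j * θ)
    (hπ : j * θ < π) (hc : cos θ = 0) : θ = j * (π / 2) := by
  have hcj : cos (j * θ) = cos (π / 2) := by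
    rcases hj with rfl | rfl <;> simp [hc]
  have hjθ : j * θ = π / 2 :=
    injOn_cos ⟨h₀.le, hπ.le⟩ ⟨by positivity, by linarith [pi_pos]⟩ hcj
  rcases hj with rfl | rfl <;> linarith

end BranchArctan

theorem stmt_1 (m a j : ℝ) (hm : 0 < m) (hj : j = 1 ∨ j = -1)
    (Y Y' Y'' : ℝ → ℝ)
    (hY1 : ∀ z, HasDerivAt Y (Y' z) z)
    (hY2 : ∀ z, HasDerivAt Y' (Y'' z) z)
    (hODE : ∀ z, Y'' z + m * Y z = 0)
    (hYa : Y a = 0) (hYa' : Y' a ≠ 0)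
    (z : ℝ) (hz1 : 0 < j * (z - a)) (hz2 : j * (z - a) < Real.pi / Real.sqrt m) :
    Tmap (fun _ => m) Y Y' j z = a := by
  set ω := √m
  have hω : 0 < ω := sqrt_pos.mpr hm
  have hODE' : ∀ x, Y'' x + ω ^ 2 * Y x = 0 := by rwa [sq_sqrt hm.le]
  obtain ⟨hYz, hY'z⟩ := harmonic_eq_sin_cos_of_eq_zero hY1 hY2 hODE' hYa z
  have h₀ : 0 < j * (ω * (z - a)) := by rw [mul_left_comm]; positivity
  have hπ : j * (ω * (z - a)) < π := by rw [mul_left_comm]; exact (lt_div_iff₀' hω).mp hz2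
  suffices Tmap (fun _ => m) Y Y' j z = z - ω * (z - a) / ω by
    rw [this, mul_div_cancel_left₀ _ hω.ne']; ring
  simp only [Tmap]
  split_ifs with h
  · rw [hY'z, mul_eq_zero, or_iff_right hYa'] at h
    rw [eq_mul_pi_div_two_of_cos_eq_zero hj h₀ hπ h]
    ring
  · have hc : cos (ω * (z - a)) ≠ 0 := fun hc => h (by rw [hY'z, hc, mul_zero])
    rw [hYz, hY'z, mul_div_mul_left _ _ hYa', ← tan_eq_sin_div_cos, arctanJ_tan hj h₀ hπ hc]
    ring
end

section
/- Let α, β, n ∈ ℝ and let y : ℝ → ℝ be twice differentiable on (−1, 1) and satisfy the Jacobi differential equation (1 − x²)·y''(x) + (β − α − (α + β + 2)x)·y'(x) + n(n + α + β + 1)·y(x) = 0 for all x ∈ (−1, 1). Define Y : (0, π) → ℝ by Y(θ) = (1 − cos θ)^{(α + 1/2)/2} · (1 + cos θ)^{(β + 1/2)/2} · y(cos θ). Then Y is twice differentiable on (0, π) and satisfies Y''(θ) + [κ² + (1/4 − α²)/(4 sin²(θ/2)) + (1/4 − β²)/(4 cos²(θ/2))]·Y(θ) = 0 for all θ ∈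 (0, π), where κ = n + (α + β + 1)/2. -/
/-!
Write `Y(θ) = w(cos θ) y(cos θ)` with the weight `w(x) = (1 - x)^a (1 + x)^b`,
`a = (α + 1/2)/2`, `b = (β + 1/2)/2`, and let `L = w'/w`. Then `Y' = -w(c) sin θ H(c)` with
`H = L y + y'`, and `Y'' = w(c) (sin² θ (H' + L H)(c) - cos θ H(c))`, so `sin θ` only enters
squared. Replacing `sin² θ` by `1 - c²` and `(1 - c²) y''` by means of the Jacobi equation, the
coefficients of `y'` and `y` in `Y'' + Q Y` vanish identically in `c`: this is where the exponents
`a`, `b` and the constant `κ` come from.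
-/

open Set Real

noncomputable def jacobiWeight (p q x : ℝ) : ℝ := (1 - x) ^ p * (1 + x) ^ q

noncomputable def jacobiWeightLogDeriv (p q x : ℝ) : ℝ := q / (1 + x) - p / (1 - x)

lemma cos_mem_Ioo_of_mem_Ioo {θ : ℝ} (hθ : θ ∈ Ioo 0 π) : cos θ ∈ Ioo (-1) 1 := by
  have hsin : 0 < sin θ := sin_pos_of_pos_of_lt_pi hθ.1 hθ.2
  have : cos θ ^ 2 < 1 := by nlinarith [sin_sq_add_cos_sq θ]
  rwa [sq_lt_one_iff_abs_lt_one, abs_lt] at this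

section JacobiWeight

variable (p q : ℝ) {x : ℝ}

lemma hasDerivAt_jacobiWeight (hx : x ∈ Ioo (-1) 1) :
    HasDerivAt (jacobiWeight p q) (jacobiWeight p q x * jacobiWeightLogDeriv p q x) x := by
  have hu : 0 < 1 - x := by linarith [hx.2]
  have hv : 0 < 1 + x := by linarith [hx.1]
  refine ((((hasDerivAt_id x).const_sub 1).rpow_const (p := p) (Or.inl hu.ne')).mul
    (((hasDerivAt_id x).const_add 1).rpow_const (p := q) (Or.inl hv.ne'))).congr_deriv ?_
  simp only [jacobiWeight, jacobiWeightLogDeriv, id, rpow_sub_one hu.ne', rpow_sub_one hv.ne']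
  field_simp
  ring

lemma hasDerivAt_jacobiWeightLogDeriv (hx : x ∈ Ioo (-1) 1) :
    HasDerivAt (jacobiWeightLogDeriv p q) (-(q / (1 + x) ^ 2) - p / (1 - x) ^ 2) x := by
  have hu : 1 - x ≠ 0 := by linarith [hx.2]
  have hv : 1 + x ≠ 0 := by linarith [hx.1]
  refine (((hasDerivAt_const x q).div ((hasDerivAt_id x).const_add 1) hv).sub
    ((hasDerivAt_const x p).div ((hasDerivAt_id x).const_sub 1) hu)).congr_deriv ?_
  simp only [id]
  ring

lemma hasDerivAt_jacobiWeight_comp_cos_mul {F : ℝ → ℝ} {F' θ : ℝ}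
    (hθ : cos θ ∈ Ioo (-1) 1) (hF : HasDerivAt F F' θ) :
    HasDerivAt (fun t ↦ jacobiWeight p q (cos t) * F t)
      (jacobiWeight p q (cos θ) * (-sin θ * jacobiWeightLogDeriv p q (cos θ) * F θ + F')) θ := by
  refine (((hasDerivAt_jacobiWeight p q hθ).comp θ (hasDerivAt_cos θ)).mul hF).congr_deriv ?_
  simp only [Function.comp]
  ring

end JacobiWeight

lemma jacobi_liouville_identity {α β n c y₀ y₁ y₂ : ℝ} (hc : c ∈ Ioo (-1) 1)
    (hODE : (1 - c ^ 2) * y₂ + (β - α - (α + β + 2) * c) * y₁ + n * (n + α + β + 1) * y₀ = 0) :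
    let a := (α + 1 / 2) / 2
    let b := (β + 1 / 2) / 2
    let L := jacobiWeightLogDeriv a b c
    (1 - c ^ 2) * (L * (L * y₀ + y₁) + ((-(b / (1 + c) ^ 2) - a / (1 - c) ^ 2) * y₀ + L * y₁ + y₂))
      - c * (L * y₀ + y₁)
      + ((n + (α + β + 1) / 2) ^ 2 + (1 / 4 - α ^ 2) / (2 * (1 - c))
        + (1 / 4 - β ^ 2) / (2 * (1 + c))) * y₀ = 0 := by
  intro a b L
  have hu : 1 - c ≠ 0 := by linarith [hc.2]
  have hv : 1 + c ≠ 0 := by linarith [hc.1]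
  have hy₁ : 2 * (1 - c ^ 2) * L - c = β - α - (α + β + 2) * c := by
    simp only [L, a, b, jacobiWeightLogDeriv]
    field_simp
    ring
  have hy₀ : (1 - c ^ 2) * (L ^ 2 - b / (1 + c) ^ 2 - a / (1 - c) ^ 2) - c * L
      + (n + (α + β + 1) / 2) ^ 2 + (1 / 4 - α ^ 2) / (2 * (1 - c))
      + (1 / 4 - β ^ 2) / (2 * (1 + c)) = n * (n + α + β + 1) := by
    simp only [L, a, b, jacobiWeightLogDeriv]
    field_simp
    ring
  linear_combination hODE + y₀ * hy₀ + y₁ * hy₁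

theorem stmt_2 (α β n : ℝ) (y y' y'' : ℝ → ℝ)
    (hy1 : ∀ x ∈ Ioo (-1 : ℝ) 1, HasDerivAt y (y' x) x)
    (hy2 : ∀ x ∈ Ioo (-1 : ℝ) 1, HasDerivAt y' (y'' x) x)
    (hODE : ∀ x ∈ Ioo (-1 : ℝ) 1,
      (1 - x ^ 2) * y'' x + (β - α - (α + β + 2) * x) * y' x
        + n * (n + α + β + 1) * y x = 0)
    (Y : ℝ → ℝ)
    (hY : ∀ θ, Y θ = (1 - Real.cos θ) ^ ((α + 1 / 2) / 2)
        * (1 + Real.cos θ) ^ ((β + 1 / 2) / 2) * y (Real.cos θ))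
    (κ : ℝ) (hκ : κ = n + (α + β + 1) / 2) :
    ∃ Y' Y'' : ℝ → ℝ, ∀ θ ∈ Ioo 0 Real.pi,
      HasDerivAt Y (Y' θ) θ ∧ HasDerivAt Y' (Y'' θ) θ ∧
      Y'' θ + (κ ^ 2 + (1 / 4 - α ^ 2) / (4 * Real.sin (θ / 2) ^ 2)
        + (1 / 4 - β ^ 2) / (4 * Real.cos (θ / 2) ^ 2)) * Y θ = 0 := by
  subst hκ
  set a := (α + 1 / 2) / 2
  set b := (β + 1 / 2) / 2
  set w := jacobiWeight a b
  set L := jacobiWeightLogDeriv a b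
  set H : ℝ → ℝ := fun x ↦ L x * y x + y' x
  set H' : ℝ → ℝ := fun x ↦ (-(b / (1 + x) ^ 2) - a / (1 - x) ^ 2) * y x + L x * y' x + y'' x
  have hYw : Y = fun t ↦ w (cos t) * y (cos t) := funext hY
  refine ⟨fun t ↦ w (cos t) * (-sin t * H (cos t)),
    fun t ↦ w (cos t) * (-sin t * L (cos t) * (-sin t * H (cos t))
      + (-cos t * H (cos t) + -sin t * (H' (cos t) * -sin t))), fun θ hθ ↦ ?_⟩
  have hc := cos_mem_Ioo_of_mem_Ioo hθ
  have hH : HasDerivAt H (H' (cos θ)) (cos θ) :=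
    ((hasDerivAt_jacobiWeightLogDeriv a b hc).mul (hy1 _ hc)).add (hy2 _ hc)
  refine ⟨?_, ?_, ?_⟩
  · rw [hYw]
    refine (hasDerivAt_jacobiWeight_comp_cos_mul a b hc
      ((hy1 _ hc).comp θ (hasDerivAt_cos θ))).congr_deriv ?_
    simp only [Function.comp_apply, H, w, L]
    ring
  · exact hasDerivAt_jacobiWeight_comp_cos_mul a b hc
      ((hasDerivAt_sin θ).neg.mul (hH.comp θ (hasDerivAt_cos θ)))
  · have hsin : 4 * sin (θ / 2) ^ 2 = 2 * (1 - cos θ) := by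
      rw [sin_sq, cos_sq, show 2 * (θ / 2) = θ by ring]; ring
    have hcos : 4 * cos (θ / 2) ^ 2 = 2 * (1 + cos θ) := by
      rw [cos_sq, show 2 * (θ / 2) = θ by ring]; ring
    rw [hsin, hcos, hYw]
    linear_combination w (cos θ) * jacobi_liouville_identity hc (hODE _ hc)
      + w (cos θ) * (L (cos θ) * H (cos θ) + H' (cos θ)) * sin_sq θ
end

section
/- Let n ≥ 1 be an integer, a < b real numbers, and w : ℝ → ℝ a function such that x ↦ x^k·w(x) is integrable on [a, b] for 0 ≤ k ≤ 2n. Let x₁, …, x_n be distinct points of (a, b], and let w₀, w₁, …, w_n and w₁^R, …, w_n^R be real numbers. Assume: (i) for every integer k with 0 ≤ k ≤ 2n, ∫_a^b x^k·w(x) dx = w₀·a^k + Σ_{i=1}^n w_i·x_i^k; and (ii) for every integer k with 0 ≤ k ≤ 2n − 1, ∫_a^b x^k·(x − a)·w(x) dx = Σ_{i=1}^n w_i^R·x_i^k. Then w_i = w_i^R/(x_i − a) for every i = 1, …, n. -/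
open Set MeasureTheory

lemma vanish_aux {n : ℕ} (x : Fin n → ℝ) (hinj : Function.Injective x) (c : Fin n → ℝ)
    (h : ∀ k, k < n → ∑ i, c i * x i ^ k = 0) : ∀ j, c j = 0 := by
  classical
  intro j
  set p := Lagrange.basis Finset.univ x j with hp
  have hinjOn : Set.InjOn x (Finset.univ : Finset (Fin n)) := fun u _ v _ h => hinj h
  have hdeg : p.natDegree < n := by
    rw [hp, Lagrange.natDegree_basis hinjOn (Finset.mem_univ j)]
    simp only [Finset.card_univ, Fintype.card_fin]
    have := j.pos
    omega
  have heval : ∀ i, p.eval (x i) = if i = j then 1 else 0 := by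
    intro i
    by_cases hij : i = j
    · subst hij; simp [hp, Lagrange.eval_basis_self hinjOn (Finset.mem_univ i)]
    · simp [hij, hp, Lagrange.eval_basis_of_ne (Ne.symm hij) (Finset.mem_univ i)]
  have hcj : c j = ∑ i, c i * p.eval (x i) := by
    simp [heval, Finset.sum_ite_eq', mul_comm]
  rw [hcj]
  have heval2 : ∀ i, p.eval (x i) = ∑ k ∈ Finset.range n, p.coeff k * x i ^ k := fun i =>
    Polynomial.eval_eq_sum_range' hdeg _
  simp_rw [heval2, Finset.mul_sum]
  rw [Finset.sum_comm]
  refine Finset.sum_eq_zero fun k hk => ?_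
  have h0 := h k (Finset.mem_range.mp hk)
  calc ∑ i, c i * (p.coeff k * x i ^ k) = p.coeff k * ∑ i, c i * x i ^ k := by
        rw [Finset.mul_sum]; exact Finset.sum_congr rfl fun i _ => by ring
    _ = 0 := by rw [h0, mul_zero]

theorem stmt_9 (n : ℕ) (hn : 1 ≤ n) (a b : ℝ) (hab : a < b) (ρ : ℝ → ℝ)
    (hint : ∀ k : ℕ, k ≤ 2 * n → IntegrableOn (fun t => t ^ k * ρ t) (Icc a b))
    (x : Fin n → ℝ) (hx : ∀ i, x i ∈ Ioc a b) (hinj : Function.Injective x)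
    (w₀ : ℝ) (wt wR : Fin n → ℝ)
    (h1 : ∀ k : ℕ, k ≤ 2 * n →
      ∫ t in a..b, t ^ k * ρ t = w₀ * a ^ k + ∑ i, wt i * (x i) ^ k)
    (h2 : ∀ k : ℕ, k ≤ 2 * n - 1 →
      ∫ t in a..b, t ^ k * (t - a) * ρ t = ∑ i, wR i * (x i) ^ k) :
    ∀ i, wt i = wR i / (x i - a) := by
  have hII : ∀ k : ℕ, k ≤ 2 * n → IntervalIntegrable (fun t => t ^ k * ρ t) volume a b := by
    intro k hk
    apply MeasureTheory.IntegrableOn.intervalIntegrable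
    rw [Set.uIcc_of_le hab.le]
    exact hint k hk
  have key : ∀ k, k < n → ∑ i, (wt i * (x i - a) - wR i) * x i ^ k = 0 := by
    intro k hk
    have e1 := h1 k (by omega)
    have e2 := h1 (k + 1) (by omega)
    have e3 := h2 k (by omega)
    have hkey : ∫ t in a..b, t ^ k * (t - a) * ρ t =
        (∫ t in a..b, t ^ (k + 1) * ρ t) - a * ∫ t in a..b, t ^ k * ρ t := by
      rw [← intervalIntegral.integral_const_mul,
        ← intervalIntegral.integral_sub (hII (k + 1) (by omega))
          ((hII k (by omega)).const_mul a)]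
      congr 1
      ext t
      ring
    have e4 : ∑ i, wR i * x i ^ k =
        (w₀ * a ^ (k + 1) + ∑ i, wt i * x i ^ (k + 1)) -
          a * (w₀ * a ^ k + ∑ i, wt i * x i ^ k) := by
      rw [← e1, ← e2, ← e3, hkey]
    calc ∑ i, (wt i * (x i - a) - wR i) * x i ^ k
        = (∑ i, wt i * x i ^ (k + 1)) - a * (∑ i, wt i * x i ^ k)
            - ∑ i, wR i * x i ^ k := by
          rw [Finset.mul_sum, ← Finset.sum_sub_distrib, ← Finset.sum_sub_distrib]
          exact Finset.sum_congr rfl fun i _ => by ring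
      _ = 0 := by rw [e4]; ring
  have hz := vanish_aux x hinj _ key
  intro i
  have hza := hz i
  have hxa : x i - a ≠ 0 := sub_ne_zero.mpr (ne_of_gt (hx i).1)
  field_simp
  linarith [hza]
end

section
/- Let n ≥ 1 be an integer, a < b real numbers, and w : ℝ → ℝ a function such that x ↦ x^k·w(x) is integrable on [a, b] for 0 ≤ k ≤ 2n + 1. Let x₁, …, x_n be distinct points of (a, b), and let w₀, w₁, …, w_n, w_{n+1} and w₁^L, …, w_n^L be real numbers. Assume: (i) for every integer k with 0 ≤ k ≤ 2n + 1, ∫_a^b x^k·w(x) dx = w₀·a^k + Σ_{i=1}^n w_i·x_i^k + w_{n+1}·b^k; and (ii) for every integer k with 0 ≤ k ≤ 2n − 1, ∫_a^b x^k·(x − a)·(b − x)·w(x) dx = Σ_{i=1}^n w_i^L·x_i^k. Then w_i = w_i^L/((x_i − a)·(b − x_i)) for every i = 1, …, n. -/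
/-!
Let `ℓᵢ` be the Lagrange basis polynomial of degree `n - 1` with `ℓᵢ(xⱼ) = δᵢⱼ`, and apply both
rules to `p = (X - a)(b - X) ℓᵢ`, of degree `n + 1 ≤ 2n + 1`. The Lobatto rule sees `p` vanish at
`a` and `b`, so `∫ p w = wᵢ (xᵢ - a)(b - xᵢ)`; the Gauss rule for `wᴸ` applied to `ℓᵢ`, of degree
`n - 1 ≤ 2n - 1`, gives `∫ p w = ∫ ℓᵢ wᴸ = wᵢᴸ`.
-/

open Set MeasureTheory Polynomial

namespace Polynomial

variable {a b : ℝ} {ρ : ℝ → ℝ} {m : ℕ}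

lemma intervalIntegrable_eval_mul
    (hρ : ∀ k < m, IntervalIntegrable (fun t => t ^ k * ρ t) volume a b)
    {p : ℝ[X]} (hp : p.natDegree < m) :
    IntervalIntegrable (fun t => p.eval t * ρ t) volume a b := by
  simp_rw [eval_eq_sum_range' hp, Finset.sum_mul, mul_assoc]
  simpa only [Finset.sum_fn] using
    IntervalIntegrable.sum _ fun k hk => (hρ k (Finset.mem_range.1 hk)).const_mul (p.coeff k)

lemma integral_eval_mul_eq_of_moments (L : ℝ[X] →ₗ[ℝ] ℝ)
    (hρ : ∀ k < m, IntervalIntegrable (fun t => t ^ k * ρ t) volume a b)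
    (hL : ∀ k < m, ∫ t in a..b, t ^ k * ρ t = L (X ^ k))
    {p : ℝ[X]} (hp : p.natDegree < m) :
    ∫ t in a..b, p.eval t * ρ t = L p := by
  conv_rhs => rw [p.as_sum_range' m hp]
  simp_rw [eval_eq_sum_range' hp, Finset.sum_mul, mul_assoc]
  rw [intervalIntegral.integral_finsetSum
    fun k hk => (hρ k (Finset.mem_range.1 hk)).const_mul _, map_sum]
  refine Finset.sum_congr rfl fun k hk => ?_
  rw [intervalIntegral.integral_const_mul, hL k (Finset.mem_range.1 hk), ← smul_X_eq_monomial,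
    map_smul, smul_eq_mul]

lemma intervalIntegrable_pow_mul_sub_mul_sub
    (hρ : ∀ k < m + 2, IntervalIntegrable (fun t => t ^ k * ρ t) volume a b) :
    ∀ k < m, IntervalIntegrable (fun t => t ^ k * ((t - a) * (b - t) * ρ t)) volume a b := by
  intro k hk
  have hdeg : (X ^ k * ((X - C a) * (C b - X))).natDegree < m + 2 := by
    have : (X ^ k * ((X - C a) * (C b - X))).natDegree ≤ k + 2 := by compute_degree
    omega
  convert intervalIntegrable_eval_mul hρ hdeg using 2 with t
  simp only [eval_mul, eval_pow, eval_X, eval_sub, eval_C]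
  ring

end Polynomial

namespace Lagrange

lemma sum_mul_eval_basis {F ι : Type*} [Field F] [Fintype ι] [DecidableEq ι] {x : ι → F}
    (hx : Function.Injective x) (c : ι → F) (i : ι) :
    ∑ j, c j * (Lagrange.basis Finset.univ x i).eval (x j) = c i := by
  rw [Finset.sum_eq_single i (fun j _ hji => by rw [eval_basis_of_ne hji.symm (Finset.mem_univ j),
    mul_zero]) (fun hi => absurd (Finset.mem_univ i) hi),
    eval_basis_self hx.injOn (Finset.mem_univ i), mul_one]

end Lagrange

theorem stmt_10_general (n : ℕ) (a b : ℝ) (ρ : ℝ → ℝ)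
    (hint : ∀ k : ℕ, k ≤ 2 * n + 1 → IntegrableOn (fun t => t ^ k * ρ t) (Icc a b))
    (x : Fin n → ℝ) (hx : ∀ i, x i ∈ Ioo a b) (hinj : Function.Injective x)
    (w₀ wn1 : ℝ) (wt wL : Fin n → ℝ)
    (h1 : ∀ k : ℕ, k ≤ 2 * n + 1 →
      ∫ t in a..b, t ^ k * ρ t = w₀ * a ^ k + (∑ i, wt i * (x i) ^ k) + wn1 * b ^ k)
    (h2 : ∀ k : ℕ, k ≤ 2 * n - 1 →
      ∫ t in a..b, t ^ k * (t - a) * (b - t) * ρ t = ∑ i, wL i * (x i) ^ k) :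
    ∀ i, wt i = wL i / ((x i - a) * (b - x i)) := by
  intro i
  obtain ⟨hai, hib⟩ := hx i
  have hn : 1 ≤ n := Fin.pos i
  have hρ : ∀ k < 2 * n + 2, IntervalIntegrable (fun t => t ^ k * ρ t) volume a b := fun k hk =>
    (intervalIntegrable_iff_integrableOn_Icc_of_le (hai.trans hib).le).2 (hint k (by omega))
  set ℓ := Lagrange.basis Finset.univ x i
  have hℓ : ℓ.natDegree = n - 1 := by simp [ℓ, Lagrange.natDegree_basis hinj.injOn]
  have hdeg : ((X - C a) * (C b - X)).natDegree ≤ 2 := by compute_degree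
  have lobatto := integral_eval_mul_eq_of_moments
    (w₀ • leval a + ∑ j, wt j • leval (x j) + wn1 • leval b) hρ
    (fun k hk => by simpa using h1 k (by omega)) (p := (X - C a) * (C b - X) * ℓ)
    ((natDegree_mul_le_of_le hdeg hℓ.le).trans_lt (by omega))
  have gauss := integral_eval_mul_eq_of_moments (∑ j, wL j • leval (x j))
    (intervalIntegrable_pow_mul_sub_mul_sub (m := 2 * n) hρ)
    (fun k hk => by simpa [mul_assoc] using h2 k (by omega)) (p := ℓ) (by omega)
  have hlobatto : ∫ t in a..b, ((X - C a) * (C b - X) * ℓ).eval t * ρ t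
      = wt i * ((x i - a) * (b - x i)) := by
    rw [lobatto]
    simpa [mul_assoc, mul_left_comm] using
      Lagrange.sum_mul_eval_basis hinj (fun j => wt j * ((x j - a) * (b - x j))) i
  have hgauss : ∫ t in a..b, ℓ.eval t * ((t - a) * (b - t) * ρ t) = wL i := by
    simpa [gauss] using Lagrange.sum_mul_eval_basis hinj wL i
  have key : wt i * ((x i - a) * (b - x i)) = wL i := by
    rw [← hlobatto, ← hgauss]
    congr 1 with t
    simp only [eval_mul, eval_sub, eval_X, eval_C]
    ring
  rw [eq_div_iff (mul_pos (sub_pos.2 hai) (sub_pos.2 hib)).ne', key]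

theorem stmt_10 (n : ℕ) (hn : 1 ≤ n) (a b : ℝ) (hab : a < b) (ρ : ℝ → ℝ)
    (hint : ∀ k : ℕ, k ≤ 2 * n + 1 → IntegrableOn (fun t => t ^ k * ρ t) (Icc a b))
    (x : Fin n → ℝ) (hx : ∀ i, x i ∈ Ioo a b) (hinj : Function.Injective x)
    (w₀ wn1 : ℝ) (wt wL : Fin n → ℝ)
    (h1 : ∀ k : ℕ, k ≤ 2 * n + 1 →
      ∫ t in a..b, t ^ k * ρ t = w₀ * a ^ k + (∑ i, wt i * (x i) ^ k) + wn1 * b ^ k)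
    (h2 : ∀ k : ℕ, k ≤ 2 * n - 1 →
      ∫ t in a..b, t ^ k * (t - a) * (b - t) * ρ t = ∑ i, wL i * (x i) ^ k) :
    ∀ i, wt i = wL i / ((x i - a) * (b - x i)) :=
  stmt_10_general n a b ρ hint x hx hinj w₀ wn1 wt wL h1 h2
end

section
/- Let α > −1 be real and n ≥ 1 an integer. Let x₁, …, x_n be distinct positive real numbers and w₁^R, …, w_n^R real numbers such that for every real polynomial p with deg p ≤ 2n − 1, ∫_0^{∞} p(x)·x^{α+1}·e^{−x} dx = Σ_{i=1}^n w_i^R·p(x_i). Set w₀ = Γ(α + 1)·Γ(α + 2)·Γ(n + 1)/Γ(n + α + 2) and w_i = w_i^R/x_i for i = 1, …, n. Then for every real polynomial p with deg p ≤ 2n, ∫_0^{∞} p(x)·x^{α}·e^{−x} dx = w₀·p(0) + Σ_{i=1}^n w_i·p(x_i). (Gauss–Radau–Laguerre quadrature has maximal degree of exactness 2n.) -/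
/-!
Write `p = p(0) + X q` with `deg q ≤ 2n - 1`. The `x^α`-integral of `X q` is the `x^(α+1)`-integral
of `q`, which the Gauss rule evaluates, so the formula holds with `w₀` replaced by
`Γ(α+1) - ∑ wᵢᴿ / xᵢ`. To identify this constant, apply the formula to the node polynomial
`∏ (X - xᵢ)`, which vanishes at the nodes. Exactness of the Gauss rule and positivity of the
weight make it the monic orthogonal polynomial for `x^(α+1) e^(-x)`, i.e. `(-1)ⁿ n! Lₙ^(α+1)`,
whose value at `0` and whose `x^α`-integral are explicit by finite-difference identities.
-/

open Polynomial MeasureTheory Real Set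
open scoped Nat

/-- The functional `p ↦ ∫₀^∞ p(t) t^β e^(-t) dt`, defined through its moments `Γ(k + β + 1)` so
that it is linear for every `β`, with no integrability side condition. -/
noncomputable def gammaMoment (β : ℝ) : ℝ[X] →ₗ[ℝ] ℝ :=
  Polynomial.lsum fun k => Gamma (k + β + 1) • LinearMap.id

theorem gammaMoment_monomial (β c : ℝ) (k : ℕ) :
    gammaMoment β (monomial k c) = c * Gamma (k + β + 1) := by
  simp [gammaMoment, mul_comm]

theorem gammaMoment_C_mul_X_pow (β c : ℝ) (k : ℕ) :
    gammaMoment β (C c * X ^ k) = c * Gamma (k + β + 1) := by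
  rw [C_mul_X_pow_eq_monomial, gammaMoment_monomial]

theorem gammaMoment_X_mul (β : ℝ) (p : ℝ[X]) :
    gammaMoment β (X * p) = gammaMoment (β + 1) p := by
  induction p using Polynomial.induction_on' with
  | add p q hp hq => rw [mul_add, map_add, map_add, hp, hq]
  | monomial k c =>
    rw [X_mul_monomial, gammaMoment_monomial, gammaMoment_monomial]
    push_cast
    ring_nf

theorem gammaMoment_eq_eval_zero_add (β : ℝ) (p : ℝ[X]) :
    gammaMoment β p = p.eval 0 * Gamma (β + 1) + gammaMoment (β + 1) p.divX := by
  conv_lhs => rw [← X_mul_divX_add p]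
  rw [map_add, gammaMoment_X_mul, ← mul_one (C _), ← pow_zero X, gammaMoment_C_mul_X_pow,
    coeff_zero_eq_eval_zero]
  push_cast
  ring_nf

theorem eval_divX {x : ℝ} (hx : x ≠ 0) (p : ℝ[X]) :
    p.divX.eval x = (p.eval x - p.eval 0) / x := by
  conv_rhs => rw [← X_mul_divX_add p]
  simp [coeff_zero_eq_eval_zero, hx]

theorem eqOn_pow_mul_rpow_mul_exp (β : ℝ) (k : ℕ) :
    EqOn (fun t : ℝ => t ^ k * (t ^ β * exp (-t)))
      (fun t => exp (-t) * t ^ ((k + β + 1 : ℝ) - 1)) (Ioi 0) := fun t (ht : 0 < t) => by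
  beta_reduce
  rw [add_sub_cancel_right, rpow_add ht, rpow_natCast]
  ring

theorem integrableOn_eval_mul_rpow_mul_exp {β : ℝ} (hβ : -1 < β) (p : ℝ[X]) :
    IntegrableOn (fun t => p.eval t * t ^ β * exp (-t)) (Ioi 0) := by
  induction p using Polynomial.induction_on' with
  | add p q hp hq =>
    simp only [eval_add, add_mul]
    exact hp.add hq
  | monomial k c =>
    have hk : 0 < (k + β + 1 : ℝ) := by linarith [k.cast_nonneg (α := ℝ)]
    simp only [eval_monomial, mul_assoc]
    exact ((GammaIntegral_convergent hk).congr_fun (eqOn_pow_mul_rpow_mul_exp β k).symm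
      measurableSet_Ioi).const_mul c

theorem integral_eval_mul_rpow_mul_exp {β : ℝ} (hβ : -1 < β) (p : ℝ[X]) :
    ∫ t in Ioi 0, p.eval t * t ^ β * exp (-t) = gammaMoment β p := by
  induction p using Polynomial.induction_on' with
  | add p q hp hq =>
    simp only [eval_add, add_mul, map_add]
    rw [integral_add (integrableOn_eval_mul_rpow_mul_exp hβ p)
      (integrableOn_eval_mul_rpow_mul_exp hβ q), hp, hq]
  | monomial k c =>
    have hk : 0 < (k + β + 1 : ℝ) := by linarith [k.cast_nonneg (α := ℝ)]
    simp only [eval_monomial, mul_assoc]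
    rw [integral_const_mul, gammaMoment_monomial, Gamma_eq_integral hk]
    congr 1
    refine setIntegral_congr_fun measurableSet_Ioi fun t ht => ?_
    exact eqOn_pow_mul_rpow_mul_exp β k ht

theorem gammaMoment_mul_self_pos {β : ℝ} (hβ : -1 < β) {d : ℝ[X]} (hd : d ≠ 0) :
    0 < gammaMoment β (d * d) := by
  have hsupp : Ioi 0 \ (d.roots.toFinset : Set ℝ) ⊆
      Function.support (fun t => (d * d).eval t * t ^ β * exp (-t)) ∩ Ioi 0 := by
    rintro t ⟨ht, hroot⟩
    have hdt : d.eval t ≠ 0 := fun h => hroot (by simpa [hd] using h)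
    have ht' : (0 : ℝ) < t := ht
    exact ⟨by rw [Function.mem_support, eval_mul]; positivity, ht⟩
  rw [← integral_eval_mul_rpow_mul_exp hβ,
    setIntegral_pos_iff_support_of_nonneg_ae _ (integrableOn_eval_mul_rpow_mul_exp hβ _)]
  · refine lt_of_lt_of_le ?_ (measure_mono hsupp)
    rw [measure_sdiff_null (d.roots.toFinset.finite_toSet.measure_zero _), volume_Ioi]
    simp
  · filter_upwards [self_mem_ae_restrict measurableSet_Ioi] with t (ht : 0 < t)
    have := mul_self_nonneg (d.eval t)
    simp only [Pi.zero_apply, eval_mul]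
    positivity

theorem map_mul_eq_zero_of_natDegree_lt {R M : Type*} [CommSemiring R] [AddCommMonoid M]
    [Module R M] (ψ : R[X] →ₗ[R] M) {p s : R[X]} {n : ℕ} (h : ∀ j < n, ψ (p * X ^ j) = 0)
    (hs : s.natDegree < n) : ψ (p * s) = 0 := by
  rw [s.as_sum_range' n hs, Finset.mul_sum, map_sum]
  refine Finset.sum_eq_zero fun j hj => ?_
  rw [← C_mul_X_pow_eq_monomial, mul_left_comm, ← smul_eq_C_mul, map_smul,
    h j (Finset.mem_range.1 hj), smul_zero]

theorem eq_of_isMonicOfDegree_of_orthogonal {ψ : ℝ[X] →ₗ[ℝ] ℝ} (hψ : ∀ d ≠ 0, 0 < ψ (d * d))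
    {p q : ℝ[X]} {n : ℕ} (hp : IsMonicOfDegree p n) (hq : IsMonicOfDegree q n)
    (hpψ : ∀ s : ℝ[X], s.natDegree < n → ψ (p * s) = 0)
    (hqψ : ∀ s : ℝ[X], s.natDegree < n → ψ (q * s) = 0) : p = q := by
  rcases eq_or_ne n 0 with rfl | hn
  · rw [isMonicOfDegree_zero_iff.1 hp, isMonicOfDegree_zero_iff.1 hq]
  by_contra hne
  have hd := hp.natDegree_sub_lt hn hq
  have : ψ ((p - q) * (p - q)) = 0 := by
    rw [sub_mul, map_sub, hpψ _ hd, hqψ _ hd, sub_zero]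
  exact (hψ _ (sub_ne_zero.2 hne)).ne' this

theorem map_nodal_mul_eq_zero {R ι : Type*} [CommRing R] [Nontrivial R] [Fintype ι]
    {ψ : R[X] →ₗ[R] R} {x w : ι → R}
    (hrule : ∀ p : R[X], p.natDegree ≤ 2 * Fintype.card ι - 1 →
      ψ p = ∑ i, w i * p.eval (x i))
    {s : R[X]} (hs : s.natDegree < Fintype.card ι) : ψ (Lagrange.nodal Finset.univ x * s) = 0 := by
  have hdeg : (Lagrange.nodal Finset.univ x * s).natDegree ≤ 2 * Fintype.card ι - 1 := by
    refine (natDegree_mul_le).trans ?_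
    rw [Lagrange.natDegree_nodal, Finset.card_univ]
    omega
  rw [hrule _ hdeg]
  refine Finset.sum_eq_zero fun i _ => ?_
  rw [eval_mul, Lagrange.eval_nodal_at_node (Finset.mem_univ i), zero_mul, mul_zero]

theorem sum_neg_one_pow_mul_choose_mul_eval_eq_zero {R : Type*} [CommRing R] {P : R[X]} {n : ℕ}
    (hP : P.natDegree < n) :
    ∑ k ∈ Finset.range (n + 1), (-1) ^ (n - k) * (n.choose k : R) * P.eval (k : R) = 0 := by
  have h := congr_fun (Polynomial.fwdDiff_iter_eq_zero_of_degree_lt hP) 0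
  rw [fwdDiff_iter_eq_sum_shift] at h
  simpa [zsmul_eq_mul] using h

theorem fwdDiff_iter_inv {c : ℝ} (hc : 0 < c) (n : ℕ) :
    (fwdDiff 1)^[n] (fun t : ℝ => t⁻¹) c = (-1) ^ n * n ! * Gamma c / Gamma (c + n + 1) := by
  induction n generalizing c with
  | zero =>
    have := (Gamma_pos_of_pos hc).ne'
    simp only [Function.iterate_zero, id_eq, pow_zero, Nat.factorial_zero, Nat.cast_one, mul_one,
      one_mul, CharP.cast_eq_zero, add_zero, Gamma_add_one hc.ne']
    field_simp
  | succ n ih =>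
    rw [Function.iterate_succ_apply', fwdDiff, ih hc, ih (by positivity), Gamma_add_one hc.ne']
    have hcn : 0 < c + n + 1 := by positivity
    have h2 : Gamma (c + 1 + n + 1) = (c + n + 1) * Gamma (c + n + 1) := by
      rw [← Gamma_add_one hcn.ne']; ring_nf
    have h3 : Gamma (c + ((n + 1 : ℕ) : ℝ) + 1) = (c + n + 1) * Gamma (c + n + 1) := by
      rw [← Gamma_add_one hcn.ne']; push_cast; ring_nf
    rw [h2, h3, Nat.factorial_succ]
    have := (Gamma_pos_of_pos hcn).ne'
    have := (Gamma_pos_of_pos hc).ne'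
    push_cast
    field_simp
    ring

theorem Gamma_add_nat_eq_mul_eval_ascPochhammer {y : ℝ} (hy : 0 < y) (j : ℕ) :
    Gamma (y + j) = Gamma y * (ascPochhammer ℝ j).eval y := by
  induction j with
  | zero => simp
  | succ j ih =>
    rw [ascPochhammer_succ_eval, Nat.cast_succ, ← add_assoc,
      Gamma_add_one (by positivity), ih]
    ring

/-- `(-1)ⁿ n! Lₙ^(β)`, the monic orthogonal polynomial of degree `n` for the weight `t^β e^(-t)`. -/
noncomputable def monicLaguerre (β : ℝ) (n : ℕ) : ℝ[X] :=
  ∑ k ∈ Finset.range (n + 1),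
    C ((-1) ^ (n - k) * n.choose k * (Gamma (n + β + 1) / Gamma (k + β + 1))) * X ^ k

theorem coeff_monicLaguerre (β : ℝ) (n m : ℕ) :
    (monicLaguerre β n).coeff m = if m ≤ n then
      (-1) ^ (n - m) * n.choose m * (Gamma (n + β + 1) / Gamma (m + β + 1)) else 0 := by
  simp only [monicLaguerre, finsetSum_coeff, coeff_C_mul_X_pow]
  simp only [Finset.sum_ite_eq, Finset.mem_range, Nat.lt_succ_iff]

theorem isMonicOfDegree_monicLaguerre {β : ℝ} (hβ : -1 < β) (n : ℕ) :
    IsMonicOfDegree (monicLaguerre β n) n := by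
  have hΓ : Gamma (n + β + 1) ≠ 0 := (Gamma_pos_of_pos (by linarith [n.cast_nonneg (α := ℝ)])).ne'
  refine (isMonicOfDegree_iff _ _).2 ⟨?_, ?_⟩
  · refine natDegree_le_iff_coeff_eq_zero.2 fun m hm => ?_
    rw [coeff_monicLaguerre, if_neg (by exact_mod_cast hm.not_ge)]
  · simp [coeff_monicLaguerre, hΓ]

theorem eval_zero_monicLaguerre (β : ℝ) (n : ℕ) :
    (monicLaguerre β n).eval 0 = (-1) ^ n * (Gamma (n + β + 1) / Gamma (β + 1)) := by
  rw [← coeff_zero_eq_eval_zero, coeff_monicLaguerre]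
  simp

theorem gammaMoment_monicLaguerre_mul_X_pow {β : ℝ} (hβ : -1 < β) {n j : ℕ} (hj : j < n) :
    gammaMoment β (monicLaguerre β n * X ^ j) = 0 := by
  -- `Γ(k + j + β + 1) / Γ(k + β + 1)` is a polynomial of degree `j < n` in `k`, which the
  -- `n`-th finite difference annihilates.
  have hP : ((ascPochhammer ℝ j).comp (X + C (β + 1))).natDegree < n := by
    rwa [natDegree_comp, ascPochhammer_natDegree, natDegree_X_add_C, mul_one]
  have hterm : ∀ k : ℕ, Gamma (k + j + β + 1) / Gamma (k + β + 1) =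
      ((ascPochhammer ℝ j).comp (X + C (β + 1))).eval (k : ℝ) := by
    intro k
    have hk : 0 < (k + β + 1 : ℝ) := by linarith [k.cast_nonneg (α := ℝ)]
    rw [eval_comp, eval_add, eval_X, eval_C, ← add_assoc,
      ← mul_div_cancel_left₀ ((ascPochhammer ℝ j).eval _) (Gamma_pos_of_pos hk).ne',
      ← Gamma_add_nat_eq_mul_eval_ascPochhammer hk]
    ring_nf
  rw [monicLaguerre, Finset.sum_mul, map_sum]
  simp_rw [mul_assoc, ← pow_add, gammaMoment_C_mul_X_pow]
  rw [← mul_zero (Gamma (n + β + 1)), ← sum_neg_one_pow_mul_choose_mul_eval_eq_zero hP,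
    Finset.mul_sum]
  refine Finset.sum_congr rfl fun k _ => ?_
  rw [← hterm]
  push_cast
  ring

theorem gammaMoment_monicLaguerre_succ {β : ℝ} (hβ : -1 < β) (n : ℕ) :
    gammaMoment β (monicLaguerre (β + 1) n) = (-1) ^ n * n ! * Gamma (β + 1) := by
  have hβ1 : 0 < β + 1 := by linarith
  have hterm : ∀ k : ℕ, Gamma (k + β + 1) / Gamma (k + (β + 1) + 1) = (β + 1 + k)⁻¹ := by
    intro k
    have hk : 0 < (k + β + 1 : ℝ) := by linarith [k.cast_nonneg (α := ℝ)]
    rw [show (k + (β + 1) + 1 : ℝ) = k + β + 1 + 1 by ring, Gamma_add_one hk.ne',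
      div_mul_cancel_right₀ (Gamma_pos_of_pos hk).ne', add_comm (β + 1), ← add_assoc]
  -- The moment sum is `Γ(n + β + 2)` times the `n`-th finite difference of `t ↦ t⁻¹` at `β + 1`.
  have hsum := fwdDiff_iter_eq_sum_shift 1 (fun t : ℝ => t⁻¹) n (β + 1)
  rw [fwdDiff_iter_inv hβ1] at hsum
  have hΓ : Gamma (β + 1 + n + 1) ≠ 0 := (Gamma_pos_of_pos (by positivity)).ne'
  rw [monicLaguerre, map_sum]
  simp_rw [gammaMoment_C_mul_X_pow]
  calc _ = Gamma (n + (β + 1) + 1) *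
        ∑ k ∈ Finset.range (n + 1),
          ((-1) ^ (n - k) * n.choose k : ℤ) • (β + 1 + k • (1 : ℝ))⁻¹ := by
        rw [Finset.mul_sum]
        refine Finset.sum_congr rfl fun k _ => ?_
        rw [zsmul_eq_mul, nsmul_eq_mul, mul_one, ← hterm k]
        push_cast
        ring
    _ = _ := by
        rw [← hsum, show (n + (β + 1) + 1 : ℝ) = β + 1 + n + 1 by ring]
        field_simp

theorem nodal_eq_monicLaguerre {β : ℝ} (hβ : -1 < β) {n : ℕ} {x w : Fin n → ℝ}
    (hrule : ∀ p : ℝ[X], p.natDegree ≤ 2 * n - 1 → gammaMoment β p = ∑ i, w i * p.eval (x i)) :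
    Lagrange.nodal Finset.univ x = monicLaguerre β n :=
  eq_of_isMonicOfDegree_of_orthogonal (fun _ => gammaMoment_mul_self_pos hβ)
    ⟨by simp [Lagrange.natDegree_nodal], Lagrange.nodal_monic⟩ (isMonicOfDegree_monicLaguerre hβ n)
    (fun _ hs => map_nodal_mul_eq_zero (by simpa using hrule) (by simpa using hs))
    (fun _ => map_mul_eq_zero_of_natDegree_lt _ fun _ => gammaMoment_monicLaguerre_mul_X_pow hβ)

theorem gammaMoment_eq_of_rule (β : ℝ) {ι : Type*} [Fintype ι] {n : ℕ} {x w : ι → ℝ}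
    (hx : ∀ i, x i ≠ 0)
    (hrule : ∀ p : ℝ[X], p.natDegree ≤ 2 * n - 1 →
      gammaMoment (β + 1) p = ∑ i, w i * p.eval (x i))
    {p : ℝ[X]} (hp : p.natDegree ≤ 2 * n) :
    gammaMoment β p =
      p.eval 0 * (Gamma (β + 1) - ∑ i, w i / x i) + ∑ i, w i / x i * p.eval (x i) := by
  have hdivX : p.divX.natDegree ≤ 2 * n - 1 := by
    rw [natDegree_divX_eq_natDegree_tsub_one]
    omega
  have hterm : ∀ i, w i * ((p.eval (x i) - p.eval 0) / x i) =
      w i / x i * p.eval (x i) - p.eval 0 * (w i / x i) := fun i => by ring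
  rw [gammaMoment_eq_eval_zero_add, hrule _ hdivX]
  simp only [eval_divX (hx _), hterm, Finset.sum_sub_distrib, ← Finset.mul_sum]
  ring

theorem gamma_sub_sum_div_eq {β : ℝ} (hβ : -1 < β) {n : ℕ} {x w : Fin n → ℝ}
    (hx : ∀ i, x i ≠ 0)
    (hrule : ∀ p : ℝ[X], p.natDegree ≤ 2 * n - 1 →
      gammaMoment (β + 1) p = ∑ i, w i * p.eval (x i)) :
    Gamma (β + 1) - ∑ i, w i / x i =
      Gamma (β + 1) * Gamma (β + 2) * Gamma ((n : ℝ) + 1) / Gamma ((n : ℝ) + β + 2) := by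
  have hroot : ∀ i, (monicLaguerre (β + 1) n).eval (x i) = 0 := fun i => by
    rw [← nodal_eq_monicLaguerre (by linarith) hrule,
      Lagrange.eval_nodal_at_node (Finset.mem_univ i)]
  have h := gammaMoment_eq_of_rule β hx hrule (p := monicLaguerre (β + 1) n)
    (by rw [(isMonicOfDegree_monicLaguerre (by linarith) n).natDegree_eq]; omega)
  simp only [hroot, mul_zero, Finset.sum_const_zero, add_zero,
    gammaMoment_monicLaguerre_succ hβ, eval_zero_monicLaguerre] at h
  have hΓ : Gamma (n + β + 2) ≠ 0 := (Gamma_pos_of_pos (by linarith [n.cast_nonneg (α := ℝ)])).ne'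
  have hΓ2 : Gamma (β + 2) ≠ 0 := (Gamma_pos_of_pos (by linarith)).ne'
  rw [show (n + (β + 1) + 1 : ℝ) = n + β + 2 by ring, show β + 1 + 1 = β + 2 by ring] at h
  rw [Gamma_nat_eq_factorial, eq_div_iff hΓ]
  field_simp at h
  linear_combination -h

theorem stmt_13_general (α : ℝ) (hα : -1 < α) (n : ℕ)
    (x : Fin n → ℝ) (hx : ∀ i, 0 < x i)
    (wR : Fin n → ℝ)
    (hrule : ∀ p : Polynomial ℝ, p.natDegree ≤ 2 * n - 1 →
      ∫ t in Set.Ioi (0 : ℝ), p.eval t * t ^ (α + 1) * Real.exp (-t)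
        = ∑ i, wR i * p.eval (x i))
    (w₀ : ℝ) (hw₀ : w₀ = Real.Gamma (α + 1) * Real.Gamma (α + 2) * Real.Gamma ((n : ℝ) + 1)
        / Real.Gamma ((n : ℝ) + α + 2))
    (wt : Fin n → ℝ) (hwt : ∀ i, wt i = wR i / x i) :
    ∀ p : Polynomial ℝ, p.natDegree ≤ 2 * n →
      ∫ t in Set.Ioi (0 : ℝ), p.eval t * t ^ α * Real.exp (-t)
        = w₀ * p.eval 0 + ∑ i, wt i * p.eval (x i) := by
  have hx0 : ∀ i, x i ≠ 0 := fun i => (hx i).ne'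
  have hrule' : ∀ p : ℝ[X], p.natDegree ≤ 2 * n - 1 →
      gammaMoment (α + 1) p = ∑ i, wR i * p.eval (x i) := fun p hp => by
    rw [← integral_eval_mul_rpow_mul_exp (by linarith), hrule p hp]
  intro p hp
  rw [integral_eval_mul_rpow_mul_exp hα, gammaMoment_eq_of_rule α hx0 hrule' hp,
    gamma_sub_sum_div_eq hα hx0 hrule', hw₀, mul_comm]
  simp only [hwt]

theorem stmt_13 (α : ℝ) (hα : -1 < α) (n : ℕ) (hn : 1 ≤ n)
    (x : Fin n → ℝ) (hx : ∀ i, 0 < x i) (hinj : Function.Injective x)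
    (wR : Fin n → ℝ)
    (hrule : ∀ p : Polynomial ℝ, p.natDegree ≤ 2 * n - 1 →
      ∫ t in Set.Ioi (0 : ℝ), p.eval t * t ^ (α + 1) * Real.exp (-t)
        = ∑ i, wR i * p.eval (x i))
    (w₀ : ℝ) (hw₀ : w₀ = Real.Gamma (α + 1) * Real.Gamma (α + 2) * Real.Gamma ((n : ℝ) + 1)
        / Real.Gamma ((n : ℝ) + α + 2))
    (wt : Fin n → ℝ) (hwt : ∀ i, wt i = wR i / x i) :
    ∀ p : Polynomial ℝ, p.natDegree ≤ 2 * n →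
      ∫ t in Set.Ioi (0 : ℝ), p.eval t * t ^ α * Real.exp (-t)
        = w₀ * p.eval 0 + ∑ i, wt i * p.eval (x i) :=
  stmt_13_general α hα n x hx wR hrule w₀ hw₀ wt hwt
end

section
/- Let α, β > −1 be real and n ≥ 1 an integer. Let x₁, …, x_n be distinct points of (−1, 1) and w₁^R, …, w_n^R real numbers such that for every real polynomial p with deg p ≤ 2n − 1, ∫_{−1}^{1} p(x)·(1 − x)^{α+1}·(1 + x)^{β} dx = Σ_{i=1}^n w_i^R·p(x_i). Set w_{n+1} = 2^{α+β+1}·Γ(α + 1)·Γ(α + 2)·Γ(n + 1)·Γ(n + β + 1)/(Γ(n + α + 2)·Γ(n + α + β + 2)) and w_i = w_i^R/(1 − x_i) for i = 1, …, n. Then for every real polynomial p with deg p ≤ 2n, ∫_{−1}^{1} p(x)·(1 − x)^{α}·(1 + x)^{β} dx = Σ_{i=1}^n w_i·p(x_i) + w_{n+1}·p(1). (Gauss–Jacobi–Radau quadrature with fixed node +1 has maximal degree of exactness 2n.) -/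
/-!
Write `w_{a,b}(t) = (1 - t)^a (1 + t)^b` and let `L = ∏ (X - x_i)` be the nodal polynomial.
A polynomial `p` of degree `≤ 2n` splits as `p = (1 - X) Q + c L²` with `c = p(1) / L(1)²` and
`deg Q ≤ 2n - 1`. Against `w_{α,β}` the factor `1 - X` turns the first part into an integral
against `w_{α+1,β}`, which the Gauss rule evaluates as `∑ w_i^R Q(x_i) = ∑ w_i p(x_i)`.
For the second part, writing `L = L(1) + (1 - X) m` and using the rule once more shows
`∫ L² w_{α,β} = L(1) ∫ L w_{α,β}`.
Finally `L` is orthogonal to all polynomials of degree `< n` for `w_{α+1,β}`, so it is a multiple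
of the Rodrigues polynomial `P` with `P w_{α+1,β} = dⁿ/dtⁿ w_{α+n+1,β+n}`; `n` integrations by
parts reduce `∫ P w_{α,β}` to a Beta integral, which gives `∫ L w_{α,β} = w_{n+1} L(1)`.
-/

open Set MeasureTheory Polynomial
open scoped Interval

lemma intervalIntegrable_mul_jacobiWeight {f : ℝ → ℝ} (hf : Continuous f) {a b : ℝ}
    (ha : -1 < a) (hb : -1 < b) :
    IntervalIntegrable (fun t => f t * (1 - t) ^ a * (1 + t) ^ b) volume (-1) 1 := by
  have hleft : IntervalIntegrable (fun t : ℝ => (1 + t) ^ b) volume (-1) 0 := by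
    simpa [add_comm] using
      (intervalIntegral.intervalIntegrable_rpow' (a := 0) (b := 1) hb).comp_add_right 1
  have hright : IntervalIntegrable (fun t : ℝ => (1 - t) ^ a) volume 0 1 := by
    simpa using
      ((intervalIntegral.intervalIntegrable_rpow' (a := 0) (b := 1) ha).comp_sub_left 1).symm
  refine IntervalIntegrable.trans (b := 0) (hleft.continuousOn_mul ?_) ?_
  · refine hf.continuousOn.mul (ContinuousOn.rpow_const (by fun_prop) fun t ht => Or.inl ?_)
    rw [uIcc_of_le (by norm_num)] at ht
    linarith [ht.2]
  · have hcont : ContinuousOn (fun t : ℝ => f t * (1 + t) ^ b) (uIcc 0 1) := by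
      refine hf.continuousOn.mul (ContinuousOn.rpow_const (by fun_prop) fun t ht => Or.inl ?_)
      rw [uIcc_of_le (by norm_num)] at ht
      linarith [ht.1]
    simpa only [mul_right_comm] using hright.continuousOn_mul hcont

noncomputable def jacobiIntegral (a b : ℝ) (p : ℝ[X]) : ℝ :=
  ∫ t in (-1 : ℝ)..1, p.eval t * (1 - t) ^ a * (1 + t) ^ b

namespace jacobiIntegral

variable {a b : ℝ}

lemma intervalIntegrable (p : ℝ[X]) (ha : -1 < a) (hb : -1 < b) :
    IntervalIntegrable (fun t => p.eval t * (1 - t) ^ a * (1 + t) ^ b) volume (-1) 1 :=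
  intervalIntegrable_mul_jacobiWeight p.continuous ha hb

lemma zero : jacobiIntegral a b 0 = 0 := by
  simp [jacobiIntegral]

lemma add (p q : ℝ[X]) (ha : -1 < a) (hb : -1 < b) :
    jacobiIntegral a b (p + q) = jacobiIntegral a b p + jacobiIntegral a b q := by
  simp only [jacobiIntegral, eval_add, add_mul]
  exact intervalIntegral.integral_add (intervalIntegrable p ha hb) (intervalIntegrable q ha hb)

lemma C_mul (c : ℝ) (p : ℝ[X]) : jacobiIntegral a b (C c * p) = c * jacobiIntegral a b p := by
  simp only [jacobiIntegral, eval_mul, eval_C, mul_assoc, intervalIntegral.integral_const_mul]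

lemma sub (p q : ℝ[X]) (ha : -1 < a) (hb : -1 < b) :
    jacobiIntegral a b (p - q) = jacobiIntegral a b p - jacobiIntegral a b q := by
  simp only [jacobiIntegral, eval_sub, sub_mul]
  exact intervalIntegral.integral_sub (intervalIntegrable p ha hb) (intervalIntegrable q ha hb)

lemma one_sub_mul (p : ℝ[X]) (ha : -1 < a) :
    jacobiIntegral a b ((1 - X) * p) = jacobiIntegral (a + 1) b p := by
  refine intervalIntegral.integral_congr fun t ht => ?_
  rw [uIcc_of_le (by norm_num)] at ht
  rcases ht.2.lt_or_eq with ht1 | rfl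
  · simp only [eval_mul, eval_sub, eval_one, eval_X, Real.rpow_add_one (sub_pos.2 ht1).ne']
    ring
  · simp [Real.zero_rpow (by linarith : a + 1 ≠ 0)]

lemma one_add_mul (p : ℝ[X]) (hb : -1 < b) :
    jacobiIntegral a b ((1 + X) * p) = jacobiIntegral a (b + 1) p := by
  refine intervalIntegral.integral_congr fun t ht => ?_
  rw [uIcc_of_le (by norm_num)] at ht
  rcases ht.1.lt_or_eq with ht1 | rfl
  · simp only [eval_mul, eval_add, eval_one, eval_X,
      Real.rpow_add_one (by linarith : (1 : ℝ) + t ≠ 0)]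
    ring
  · simp [Real.zero_rpow (by linarith : b + 1 ≠ 0)]

end jacobiIntegral

lemma integral_rpow_mul_one_sub_rpow {u v : ℝ} (hu : 0 < u) (hv : 0 < v) :
    ∫ x in (0 : ℝ)..1, x ^ (u - 1) * (1 - x) ^ (v - 1)
      = Real.Gamma u * Real.Gamma v / Real.Gamma (u + v) := by
  have hbeta := Complex.betaIntegral_eq_Gamma_mul_div u v (by simpa) (by simpa)
  rw [Complex.betaIntegral, ← Complex.ofReal_add, Complex.Gamma_ofReal, Complex.Gamma_ofReal,
    Complex.Gamma_ofReal] at hbeta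
  have hcast :
      ∫ x in (0 : ℝ)..1, (x : ℂ) ^ ((u : ℂ) - 1) * (1 - (x : ℂ)) ^ ((v : ℂ) - 1)
      = ((∫ x in (0 : ℝ)..1, x ^ (u - 1) * (1 - x) ^ (v - 1) : ℝ) : ℂ) := by
    rw [← intervalIntegral.integral_ofReal]
    refine intervalIntegral.integral_congr fun x hx => ?_
    rw [uIcc_of_le zero_le_one] at hx
    rw [Complex.ofReal_mul, Complex.ofReal_cpow hx.1, Complex.ofReal_cpow (by linarith [hx.2])]
    push_cast
    ring_nf
  exact_mod_cast hcast ▸ hbeta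

lemma jacobiIntegral_one {a b : ℝ} (ha : -1 < a) (hb : -1 < b) :
    jacobiIntegral a b 1
      = 2 ^ (a + b + 1) * Real.Gamma (a + 1) * Real.Gamma (b + 1) / Real.Gamma (a + b + 2) := by
  have hsub := intervalIntegral.integral_comp_mul_add
    (fun t : ℝ => (1 - t) ^ a * (1 + t) ^ b) (two_ne_zero' ℝ) (-1) (a := 0) (b := 1)
  norm_num only at hsub
  have hscale : ∫ x in (0 : ℝ)..1, (1 - (2 * x + -1)) ^ a * (1 + (2 * x + -1)) ^ b
      = 2 ^ (a + b) * ∫ x in (0 : ℝ)..1, x ^ ((b + 1) - 1) * (1 - x) ^ ((a + 1) - 1) := by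
    rw [← intervalIntegral.integral_const_mul]
    refine intervalIntegral.integral_congr fun x hx => ?_
    rw [uIcc_of_le zero_le_one] at hx
    rw [show 1 - (2 * x + -1) = 2 * (1 - x) by ring, show 1 + (2 * x + -1) = 2 * x by ring,
      Real.mul_rpow zero_le_two (by linarith [hx.2]), Real.mul_rpow zero_le_two hx.1,
      Real.rpow_add two_pos, add_sub_cancel_right, add_sub_cancel_right]
    ring
  rw [hscale, integral_rpow_mul_one_sub_rpow (by linarith) (by linarith)] at hsub
  simp only [jacobiIntegral, eval_one, one_mul]
  rw [smul_eq_mul, show b + 1 + (a + 1) = a + b + 2 by ring] at hsub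
  rw [Real.rpow_add two_pos, Real.rpow_one]
  linear_combination (-2) * hsub

lemma jacobiIntegral_mul_self_pos {p : ℝ[X]} (hp : p ≠ 0) {a b : ℝ} (ha : -1 < a)
    (hb : -1 < b) :
    0 < jacobiIntegral a b (p * p) := by
  have hnonneg : 0 ≤ᵐ[volume.restrict (Ι (-1 : ℝ) 1)]
      fun t => (p * p).eval t * (1 - t) ^ a * (1 + t) ^ b := by
    rw [uIoc_of_le (by norm_num)]
    filter_upwards [ae_restrict_mem measurableSet_Ioc] with t ht
    rw [eval_mul]
    exact mul_nonneg (mul_nonneg (mul_self_nonneg _) (Real.rpow_nonneg (by linarith [ht.2]) a))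
      (Real.rpow_nonneg (by linarith [ht.1]) b)
  rw [jacobiIntegral, intervalIntegral.integral_pos_iff_support_of_nonneg_ae' hnonneg
    (jacobiIntegral.intervalIntegrable _ ha hb)]
  have hsupport : Ioo (-1 : ℝ) 1 \ {t | p.IsRoot t}
      ⊆ Function.support (fun t => (p * p).eval t * (1 - t) ^ a * (1 + t) ^ b)
        ∩ Ioc (-1) 1 := by
    rintro t ⟨ht, hroot⟩
    refine ⟨?_, Ioo_subset_Ioc_self ht⟩
    rw [Function.mem_support, eval_mul]
    exact mul_ne_zero (mul_ne_zero (mul_self_ne_zero.2 hroot)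
      (Real.rpow_pos_of_pos (by linarith [ht.2]) a).ne')
      (Real.rpow_pos_of_pos (by linarith [ht.1]) b).ne'
  refine ⟨by norm_num, ?_⟩
  calc 0 < volume (Ioo (-1 : ℝ) 1) := by simp
    _ = volume (Ioo (-1 : ℝ) 1 \ {t | p.IsRoot t}) :=
      (measure_sdiff_null ((p.finite_setOfPred_isRoot hp).measure_zero _)).symm
    _ ≤ _ := measure_mono hsupport

noncomputable def weightDeriv (a b : ℝ) (S : ℝ[X]) : ℝ[X] :=
  derivative S * ((1 - X) * (1 + X)) - C a * S * (1 + X) + C b * S * (1 - X)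

lemma hasDerivAt_mul_jacobiWeight (S : ℝ[X]) (a b : ℝ) {t : ℝ} (ht : t ∈ Ioo (-1 : ℝ) 1) :
    HasDerivAt (fun t => S.eval t * (1 - t) ^ a * (1 + t) ^ b)
      ((weightDeriv a b S).eval t * (1 - t) ^ (a - 1) * (1 + t) ^ (b - 1)) t := by
  have h1 : 0 < 1 - t := by linarith [ht.2]
  have h2 : 0 < 1 + t := by linarith [ht.1]
  have hA := ((hasDerivAt_id t).const_sub 1).rpow_const (p := a) (Or.inl h1.ne')
  have hB := ((hasDerivAt_id t).const_add 1).rpow_const (p := b) (Or.inl h2.ne')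
  refine (((S.hasDerivAt t).mul hA).mul hB).congr_deriv ?_
  have e1 : (1 - t) ^ a = (1 - t) ^ (a - 1) * (1 - t) := by
    rw [← Real.rpow_add_one h1.ne', sub_add_cancel]
  have e2 : (1 + t) ^ b = (1 + t) ^ (b - 1) * (1 + t) := by
    rw [← Real.rpow_add_one h2.ne', sub_add_cancel]
  simp only [weightDeriv, eval_add, eval_sub, eval_mul, eval_C, eval_one, eval_X, id,
    Pi.mul_apply, e1, e2]
  ring

lemma jacobiIntegral_weightDeriv (S : ℝ[X]) {a b : ℝ} (ha : 0 < a) (hb : 0 < b) :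
    jacobiIntegral (a - 1) (b - 1) (weightDeriv a b S) = 0 := by
  have hcont : Continuous fun t => S.eval t * (1 - t) ^ a * (1 + t) ^ b :=
    (S.continuous.mul ((continuous_const.sub continuous_id).rpow_const fun _ => Or.inr ha.le)).mul
      ((continuous_const.add continuous_id).rpow_const fun _ => Or.inr hb.le)
  rw [jacobiIntegral, intervalIntegral.integral_eq_sub_of_hasDerivAt_of_le (by norm_num)
    hcont.continuousOn (fun t ht => hasDerivAt_mul_jacobiWeight S a b ht)
    (jacobiIntegral.intervalIntegrable _ (by linarith) (by linarith))]
  norm_num [Real.zero_rpow ha.ne', Real.zero_rpow hb.ne']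

lemma natDegree_weightDeriv_le (a b : ℝ) (S : ℝ[X]) :
    (weightDeriv a b S).natDegree ≤ S.natDegree + 1 := by
  have hquad : ((1 - X) * (1 + X) : ℝ[X]).natDegree ≤ 2 := by compute_degree
  have hlin₁ : ((1 + X) : ℝ[X]).natDegree ≤ 1 := by compute_degree
  have hlin₂ : ((1 - X) : ℝ[X]).natDegree ≤ 1 := by compute_degree
  have hderiv : (derivative S * ((1 - X) * (1 + X))).natDegree ≤ S.natDegree + 1 := by
    rcases Nat.eq_zero_or_pos S.natDegree with h0 | hpos
    · simp [derivative_of_natDegree_zero h0]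
    · exact natDegree_mul_le.trans (by have := natDegree_derivative_le S; omega)
  have hterm (c : ℝ) (Y : ℝ[X]) (hY : Y.natDegree ≤ 1) :
      (C c * S * Y).natDegree ≤ S.natDegree + 1 :=
    natDegree_mul_le.trans (add_le_add (natDegree_C_mul_le c S) hY)
  exact natDegree_add_le_of_degree_le
    ((natDegree_sub_le_of_le hderiv (hterm a _ hlin₁)).trans (max_self _).le) (hterm b _ hlin₂)

-- `q * weightDeriv (a + 1) (b + 1) S` differs by the two terms on the right from
-- `weightDeriv (c + 1) (b + 1) (q * S)`, whose integral against `w_{c,b}` vanishes.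
lemma jacobiIntegral_mul_weightDeriv {a b c : ℝ} (hb : -1 < b) (hc : -1 < c) (q S : ℝ[X]) :
    jacobiIntegral c b (q * weightDeriv (a + 1) (b + 1) S)
      = -jacobiIntegral (c + 1) (b + 1) (derivative q * S)
        - (a - c) * jacobiIntegral c (b + 1) (q * S) := by
  have hsplit : q * weightDeriv (a + 1) (b + 1) S
      = weightDeriv (c + 1) (b + 1) (q * S) - (1 - X) * ((1 + X) * (derivative q * S))
        - C (a - c) * ((1 + X) * (q * S)) := by
    simp only [weightDeriv, derivative_mul, C_add, C_sub, C_1]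
    ring
  have hzero := jacobiIntegral_weightDeriv (q * S) (a := c + 1) (b := b + 1)
    (by linarith) (by linarith)
  simp only [add_sub_cancel_right] at hzero
  rw [hsplit, jacobiIntegral.sub _ _ hc hb, jacobiIntegral.sub _ _ hc hb, hzero,
    jacobiIntegral.one_sub_mul _ hc, jacobiIntegral.one_add_mul _ hb, jacobiIntegral.C_mul,
    jacobiIntegral.one_add_mul _ hb]
  ring

/-- `rodrigues a b k * (1 - t) ^ a * (1 + t) ^ b` is the `k`-th derivative of
`(1 - t) ^ (a + k) * (1 + t) ^ (b + k)`. -/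
noncomputable def rodrigues : ℝ → ℝ → ℕ → ℝ[X]
  | _, _, 0 => 1
  | a, b, k + 1 => weightDeriv (a + 1) (b + 1) (rodrigues (a + 1) (b + 1) k)

lemma natDegree_rodrigues_le (a b : ℝ) (k : ℕ) : (rodrigues a b k).natDegree ≤ k := by
  induction k generalizing a b with
  | zero => simp [rodrigues]
  | succ k ih => exact (natDegree_weightDeriv_le _ _ _).trans (by simpa using ih (a + 1) (b + 1))

lemma rodrigues_eval_one_mul_Gamma {a : ℝ} (ha : -1 < a) (b : ℝ) (k : ℕ) :
    (rodrigues a b k).eval 1 * Real.Gamma (a + 1) = (-2) ^ k * Real.Gamma (a + 1 + k) := by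
  induction k generalizing a b with
  | zero => simp [rodrigues]
  | succ k ih =>
    have hGamma : Real.Gamma (a + 2) = (a + 1) * Real.Gamma (a + 1) := by
      rw [show a + 2 = a + 1 + 1 by ring, Real.Gamma_add_one (by linarith)]
    have h := ih (a := a + 1) (by linarith) (b + 1)
    rw [show a + 1 + 1 = a + 2 by ring, hGamma] at h
    rw [show a + 1 + ((k + 1 : ℕ) : ℝ) = a + 2 + k by push_cast; ring]
    simp only [rodrigues, weightDeriv, eval_add, eval_sub, eval_mul, eval_C, eval_one, eval_X]
    linear_combination (-2) * h

lemma rodrigues_eval_one_ne_zero {a : ℝ} (ha : -1 < a) (b : ℝ) (k : ℕ) :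
    (rodrigues a b k).eval 1 ≠ 0 := by
  intro h0
  have h := rodrigues_eval_one_mul_Gamma ha b k
  rw [h0, zero_mul] at h
  exact mul_ne_zero (pow_ne_zero k (by norm_num))
    (Real.Gamma_pos_of_pos (by linarith [k.cast_nonneg (α := ℝ)])).ne' h.symm

lemma jacobiIntegral_mul_rodrigues_eq_zero {a b : ℝ} (ha : -1 < a) (hb : -1 < b) {k : ℕ}
    {q : ℝ[X]} (hq : q.natDegree < k) : jacobiIntegral a b (q * rodrigues a b k) = 0 := by
  induction k generalizing a b q with
  | zero => exact absurd hq (Nat.not_lt_zero _)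
  | succ k ih =>
    rw [rodrigues, jacobiIntegral_mul_weightDeriv hb ha, sub_self, zero_mul, sub_zero, neg_eq_zero]
    rcases Nat.eq_zero_or_pos q.natDegree with h0 | hpos
    · rw [derivative_of_natDegree_zero h0, zero_mul, jacobiIntegral.zero]
    · exact ih (by linarith) (by linarith) ((natDegree_derivative_lt hpos.ne').trans_le (by omega))

lemma jacobiIntegral_rodrigues_mul_Gamma {a b c : ℝ} (hac : c < a) (hb : -1 < b) (hc : -1 < c)
    (k : ℕ) : jacobiIntegral c b (rodrigues a b k) * Real.Gamma (a - c)
      = (-1) ^ k * Real.Gamma (a - c + k) * jacobiIntegral c (b + k) 1 := by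
  induction k generalizing a b with
  | zero => simp [rodrigues, mul_comm]
  | succ k ih =>
    have hGamma : Real.Gamma (a + 1 - c) = (a - c) * Real.Gamma (a - c) := by
      rw [show a + 1 - c = a - c + 1 by ring, Real.Gamma_add_one (by linarith)]
    have h := ih (a := a + 1) (b := b + 1) (by linarith) (by linarith)
    rw [hGamma, show a + 1 - c + k = a - c + (k + 1 : ℕ) by push_cast; ring,
      show b + 1 + k = b + (k + 1 : ℕ) by push_cast; ring] at h
    have hstep := jacobiIntegral_mul_weightDeriv hb hc 1 (rodrigues (a + 1) (b + 1) k) (a := a)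
    rw [one_mul, derivative_one, zero_mul, one_mul] at hstep
    rw [rodrigues, hstep, jacobiIntegral.zero]
    linear_combination (-1) * h

lemma exists_eq_C_sub_X_mul_of_isRoot {R : Type*} [CommRing R] [Nontrivial R] {p : R[X]} {c : R}
    (hp : p.IsRoot c) : ∃ q, p = (C c - X) * q ∧ q.natDegree = p.natDegree - 1 := by
  refine ⟨-(p /ₘ (X - C c)), ?_, ?_⟩
  · linear_combination -(mul_divByMonic_eq_iff_isRoot.2 hp)
  · rw [natDegree_neg, natDegree_divByMonic _ (monic_X_sub_C c), natDegree_X_sub_C]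

lemma eq_C_coeff_mul_of_orthogonal {a b : ℝ} (ha : -1 < a) (hb : -1 < b) {n : ℕ} {L P : ℝ[X]}
    (hL : L.Monic) (hLdeg : L.natDegree = n) (hPdeg : P.natDegree ≤ n)
    (hLorth : ∀ s : ℝ[X], s.natDegree < n → jacobiIntegral a b (s * L) = 0)
    (hPorth : ∀ s : ℝ[X], s.natDegree < n → jacobiIntegral a b (s * P) = 0) :
    P = C (P.coeff n) * L := by
  set E := P - C (P.coeff n) * L
  by_contra hne
  have hE : E ≠ 0 := sub_ne_zero.2 hne
  have hEdeg : E.natDegree < n := by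
    have hle : E.natDegree ≤ n :=
      (natDegree_sub_le_of_le hPdeg ((natDegree_C_mul_le _ _).trans hLdeg.le)).trans
        (max_self n).le
    refine hle.lt_of_ne fun h => hE (leadingCoeff_eq_zero.1 ?_)
    rw [leadingCoeff, h, coeff_sub, coeff_C_mul, ← hLdeg, hL.coeff_natDegree, mul_one, sub_self]
  have hEE : E * E = E * P - C (P.coeff n) * (E * L) := by ring
  have hpos := jacobiIntegral_mul_self_pos hE ha hb
  rw [hEE, jacobiIntegral.sub _ _ ha hb, jacobiIntegral.C_mul, hPorth E hEdeg, hLorth E hEdeg,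
    mul_zero, sub_zero] at hpos
  exact hpos.false

lemma jacobiIntegral_mul_self_of_gauss {a b : ℝ} (ha : -1 < a) (hb : -1 < b) {n : ℕ}
    (x : Fin n → ℝ) (wR : Fin n → ℝ)
    (hrule : ∀ p : ℝ[X], p.natDegree ≤ 2 * n - 1 →
      jacobiIntegral (a + 1) b p = ∑ i, wR i * p.eval (x i))
    {L : ℝ[X]} (hLdeg : L.natDegree ≤ n) (hLroot : ∀ i, L.eval (x i) = 0) :
    jacobiIntegral a b (L * L) = L.eval 1 * jacobiIntegral a b L := by
  obtain ⟨m, hm, hmdeg⟩ := exists_eq_C_sub_X_mul_of_isRoot (p := L - C (L.eval 1)) (c := 1)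
    (by simp)
  rw [C_1] at hm
  have hsplit : L * L = (1 - X) * (m * L) + C (L.eval 1) * L := by linear_combination L * hm
  have hmL : (m * L).natDegree ≤ 2 * n - 1 := by
    have := natDegree_sub_le_of_le hLdeg ((natDegree_C (L.eval 1)).trans_le (Nat.zero_le n))
    exact natDegree_mul_le.trans (by omega)
  rw [hsplit, jacobiIntegral.add _ _ ha hb, jacobiIntegral.one_sub_mul _ ha, hrule _ hmL,
    jacobiIntegral.C_mul]
  simp only [eval_mul, hLroot, mul_zero, Finset.sum_const_zero, zero_add]

theorem jacobiIntegral_eq_radau_of_gauss {a b w : ℝ} (ha : -1 < a) (hb : -1 < b) {n : ℕ}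
    (x : Fin n → ℝ) (hx : ∀ i, x i ≠ 1) (wR : Fin n → ℝ)
    (hrule : ∀ p : ℝ[X], p.natDegree ≤ 2 * n - 1 →
      jacobiIntegral (a + 1) b p = ∑ i, wR i * p.eval (x i))
    {L : ℝ[X]} (hLdeg : L.natDegree ≤ n) (hLroot : ∀ i, L.eval (x i) = 0)
    (hL1 : L.eval 1 ≠ 0)
    (hL : jacobiIntegral a b L = w * L.eval 1) (p : ℝ[X]) (hp : p.natDegree ≤ 2 * n) :
    jacobiIntegral a b p = ∑ i, wR i / (1 - x i) * p.eval (x i) + w * p.eval 1 := by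
  have hLL : jacobiIntegral a b (L * L) = w * L.eval 1 ^ 2 := by
    rw [jacobiIntegral_mul_self_of_gauss ha hb x wR hrule hLdeg hLroot, hL]
    ring
  set r := C (p.eval 1 / L.eval 1 ^ 2) * (L * L)
  have hr1 : r.eval 1 = p.eval 1 := by
    simp only [r, eval_mul, eval_C]
    field_simp
  have hrx (i : Fin n) : r.eval (x i) = 0 := by simp [r, hLroot]
  obtain ⟨Q, hQ, hQdeg⟩ := exists_eq_C_sub_X_mul_of_isRoot (p := p - r) (c := 1) (by simp [hr1])
  rw [C_1] at hQ
  have hQle : Q.natDegree ≤ 2 * n - 1 := by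
    have hr : r.natDegree ≤ 2 * n :=
      (natDegree_C_mul_le _ _).trans (natDegree_mul_le.trans (by omega))
    have := natDegree_sub_le_of_le hp hr
    omega
  have hQx (i : Fin n) : wR i / (1 - x i) * p.eval (x i) = wR i * Q.eval (x i) := by
    have h := congrArg (eval (x i)) hQ
    simp only [eval_sub, eval_mul, eval_one, eval_X, hrx, sub_zero] at h
    rw [h]
    field_simp [sub_ne_zero.2 (hx i).symm]
  calc jacobiIntegral a b p = jacobiIntegral a b ((1 - X) * Q + r) := by
        rw [← hQ, sub_add_cancel]
    _ = ∑ i, wR i * Q.eval (x i) + w * p.eval 1 := by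
        rw [jacobiIntegral.add _ _ ha hb, jacobiIntegral.one_sub_mul _ ha, hrule Q hQle,
          jacobiIntegral.C_mul, hLL]
        field_simp
    _ = ∑ i, wR i / (1 - x i) * p.eval (x i) + w * p.eval 1 := by simp only [hQx]

noncomputable def radauEndpointWeight (α β : ℝ) (n : ℕ) : ℝ :=
  2 ^ (α + β + 1) * Real.Gamma (α + 1) * Real.Gamma (α + 2)
    * Real.Gamma ((n : ℝ) + 1) * Real.Gamma ((n : ℝ) + β + 1)
    / (Real.Gamma ((n : ℝ) + α + 2) * Real.Gamma ((n : ℝ) + α + β + 2))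

lemma jacobiIntegral_rodrigues {α β : ℝ} (hα : -1 < α) (hβ : -1 < β) (n : ℕ) :
    jacobiIntegral α β (rodrigues (α + 1) β n)
      = radauEndpointWeight α β n * (rodrigues (α + 1) β n).eval 1 := by
  have hn : (0 : ℝ) ≤ n := n.cast_nonneg
  have hint := jacobiIntegral_rodrigues_mul_Gamma (by linarith : α < α + 1) hβ hα n
  rw [jacobiIntegral_one hα (by linarith), add_sub_cancel_left, Real.Gamma_one, mul_one] at hint
  have heval := rodrigues_eval_one_mul_Gamma (by linarith : -1 < α + 1) β n
  have hGamma₁ : Real.Gamma (α + 2) ≠ 0 := (Real.Gamma_pos_of_pos (by linarith)).ne'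
  have hGamma₂ : Real.Gamma (n + α + 2) ≠ 0 := (Real.Gamma_pos_of_pos (by linarith)).ne'
  have hGamma₃ : Real.Gamma (n + α + β + 2) ≠ 0 := (Real.Gamma_pos_of_pos (by linarith)).ne'
  rw [show α + 1 + 1 = α + 2 by ring, show α + 2 + n = n + α + 2 by ring] at heval
  rw [hint, radauEndpointWeight, eq_div_iff hGamma₁ |>.2 heval,
    show α + (β + n) + 1 = α + β + 1 + n by ring, Real.rpow_add two_pos, Real.rpow_natCast,
    show α + (β + n) + 2 = n + α + β + 2 by ring, show β + n + 1 = n + β + 1 by ring,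
    add_comm 1 (n : ℝ), neg_pow (2 : ℝ)]
  field_simp

lemma jacobiIntegral_eq_radauEndpointWeight_mul_eval_one {α β : ℝ} (hα : -1 < α)
    (hβ : -1 < β) {n : ℕ} {L : ℝ[X]} (hL : L.Monic) (hLdeg : L.natDegree = n)
    (hLorth : ∀ s : ℝ[X], s.natDegree < n → jacobiIntegral (α + 1) β (s * L) = 0) :
    jacobiIntegral α β L = radauEndpointWeight α β n * L.eval 1 := by
  set P := rodrigues (α + 1) β n with hP
  have hPL : P = C (P.coeff n) * L :=
    eq_C_coeff_mul_of_orthogonal (by linarith) hβ hL hLdeg (natDegree_rodrigues_le _ _ _) hLorth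
      fun s hs => jacobiIntegral_mul_rodrigues_eq_zero (by linarith) hβ hs
  have hcoeff : P.coeff n ≠ 0 := fun h0 =>
    rodrigues_eval_one_ne_zero (a := α + 1) (by linarith) β n
      (by rw [← hP, hPL, h0, C_0, zero_mul, eval_zero])
  have h := jacobiIntegral_rodrigues hα hβ n
  rw [← hP, hPL, jacobiIntegral.C_mul, eval_mul, eval_C, mul_left_comm] at h
  exact mul_left_cancel₀ hcoeff h

theorem stmt_15_general (α β : ℝ) (hα : -1 < α) (hβ : -1 < β) (n : ℕ)
    (x : Fin n → ℝ) (hx : ∀ i, x i ∈ Ioo (-1 : ℝ) 1)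
    (wR : Fin n → ℝ)
    (hrule : ∀ p : Polynomial ℝ, p.natDegree ≤ 2 * n - 1 →
      ∫ t in (-1 : ℝ)..1, p.eval t * (1 - t) ^ (α + 1) * (1 + t) ^ β
        = ∑ i, wR i * p.eval (x i))
    (wn1 : ℝ) (hwn1 : wn1 = 2 ^ (α + β + 1) * Real.Gamma (α + 1) * Real.Gamma (α + 2)
        * Real.Gamma ((n : ℝ) + 1) * Real.Gamma ((n : ℝ) + β + 1)
        / (Real.Gamma ((n : ℝ) + α + 2) * Real.Gamma ((n : ℝ) + α + β + 2)))
    (wt : Fin n → ℝ) (hwt : ∀ i, wt i = wR i / (1 - x i)) :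
    ∀ p : Polynomial ℝ, p.natDegree ≤ 2 * n →
      ∫ t in (-1 : ℝ)..1, p.eval t * (1 - t) ^ α * (1 + t) ^ β
        = (∑ i, wt i * p.eval (x i)) + wn1 * p.eval 1 := by
  set L := Lagrange.nodal Finset.univ x
  have hLdeg : L.natDegree = n := by simp [L, Lagrange.natDegree_nodal]
  have hLroot (i : Fin n) : L.eval (x i) = 0 := Lagrange.eval_nodal_at_node (Finset.mem_univ i)
  have hL1 : L.eval 1 ≠ 0 := by
    rw [Lagrange.eval_nodal]
    exact Finset.prod_ne_zero_iff.2 fun i _ => sub_ne_zero.2 (hx i).2.ne'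
  have hLorth (s : ℝ[X]) (hs : s.natDegree < n) : jacobiIntegral (α + 1) β (s * L) = 0 := by
    rw [jacobiIntegral, hrule _ (natDegree_mul_le.trans (by omega))]
    simp [hLroot]
  have hJL : jacobiIntegral α β L = wn1 * L.eval 1 :=
    hwn1 ▸ jacobiIntegral_eq_radauEndpointWeight_mul_eval_one hα hβ Lagrange.nodal_monic hLdeg
      hLorth
  intro p hp
  simp only [hwt]
  exact jacobiIntegral_eq_radau_of_gauss hα hβ x (fun i => (hx i).2.ne) wR hrule hLdeg.le hLroot
    hL1 hJL p hp

theorem stmt_15 (α β : ℝ) (hα : -1 < α) (hβ : -1 < β) (n : ℕ) (hn : 1 ≤ n)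
    (x : Fin n → ℝ) (hx : ∀ i, x i ∈ Ioo (-1 : ℝ) 1) (hinj : Function.Injective x)
    (wR : Fin n → ℝ)
    (hrule : ∀ p : Polynomial ℝ, p.natDegree ≤ 2 * n - 1 →
      ∫ t in (-1 : ℝ)..1, p.eval t * (1 - t) ^ (α + 1) * (1 + t) ^ β
        = ∑ i, wR i * p.eval (x i))
    (wn1 : ℝ) (hwn1 : wn1 = 2 ^ (α + β + 1) * Real.Gamma (α + 1) * Real.Gamma (α + 2)
        * Real.Gamma ((n : ℝ) + 1) * Real.Gamma ((n : ℝ) + β + 1)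
        / (Real.Gamma ((n : ℝ) + α + 2) * Real.Gamma ((n : ℝ) + α + β + 2)))
    (wt : Fin n → ℝ) (hwt : ∀ i, wt i = wR i / (1 - x i)) :
    ∀ p : Polynomial ℝ, p.natDegree ≤ 2 * n →
      ∫ t in (-1 : ℝ)..1, p.eval t * (1 - t) ^ α * (1 + t) ^ β
        = (∑ i, wt i * p.eval (x i)) + wn1 * p.eval 1 :=
  stmt_15_general α β hα hβ n x hx wR hrule wn1 hwn1 wt hwt
end

section
/- Let ι be a type, s a nonempty finite subset of ι, v : ι → ℝ injective on s (the interpolation nodes), f : ι → ℝ (the data values), and x ∈ ℝ with x ≠ v(i) for all i ∈ s. For i ∈ s define the barycentric weight u_i = (Π_{j ∈ s, j ≠ i} (v(i) − v(j)))^{−1}. Then Σ_{i ∈ s} u_i/(x − v(i)) ≠ 0, and the Lagrange interpolation polynomial P of the data (i.e., the unique polynomial of degree < |s| with P(v(i)) = f(i) for all i ∈ s) satisfies P(x) = (Σ_{i ∈ s} u_i·f(i)/(x − v(i))) / (Σ_{i ∈ s} u_i/(x − v(i))). -/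
/-! By uniqueness, `P` is `Lagrange.interpolate s v f`, and `u` agrees with `Lagrange.nodalWeight s v`
on `s`. Dividing the first barycentric form of the interpolant by that of the constant `1`, whose
interpolant is `1`, gives both the non-vanishing of the denominator and the second barycentric form. -/

theorem stmt_18 {ι : Type*} [DecidableEq ι] (s : Finset ι) (hs : s.Nonempty)
    (v : ι → ℝ) (hinj : Set.InjOn v s) (f : ι → ℝ) (x : ℝ)
    (hx : ∀ i ∈ s, x ≠ v i)
    (u : ι → ℝ) (hu : ∀ i ∈ s, u i = (∏ j ∈ s.erase i, (v i - v j))⁻¹) :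
    (∑ i ∈ s, u i / (x - v i)) ≠ 0 ∧
    ∀ P : Polynomial ℝ, P.degree < (s.card : WithBot ℕ) →
      (∀ i ∈ s, P.eval (v i) = f i) →
      P.eval x = (∑ i ∈ s, u i * f i / (x - v i)) / (∑ i ∈ s, u i / (x - v i)) := by
  have hweight : ∀ i ∈ s, u i = Lagrange.nodalWeight s v i := fun i hi => by
    rw [hu i hi, Lagrange.nodalWeight, Finset.prod_inv_distrib]
  have hden : ∑ i ∈ s, u i / (x - v i) = ∑ i ∈ s, Lagrange.nodalWeight s v i * (x - v i)⁻¹ :=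
    Finset.sum_congr rfl fun i hi => by rw [hweight i hi, div_eq_mul_inv]
  have hnum : ∑ i ∈ s, u i * f i / (x - v i) =
      ∑ i ∈ s, Lagrange.nodalWeight s v i * (x - v i)⁻¹ * f i :=
    Finset.sum_congr rfl fun i hi => by rw [hweight i hi]; ring
  refine ⟨hden ▸ Lagrange.sum_nodalWeight_mul_inv_sub_ne_zero hinj hx hs, fun P hdeg heval => ?_⟩
  rw [Lagrange.eq_interpolate_of_eval_eq f hinj hdeg heval,
    Lagrange.eval_interpolate_not_at_node' f hinj hs hx, hnum, hden]
end
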